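/- arXiv:2307.07222 — 7 statements merged into one kernel-verified Lean document; each statement's English description precedes it below -/
import Mathlib

section
/- Let G be a directed graph, let P' and P be directed paths in G (given as injective sequences of vertices with an edge between consecutive vertices), and for a vertex x let first(x,P) denote the earliest vertex of P (in path order) reachable from x in G, when it exists. Fix a vertex c of P. Then the set S = {p : p is a vertex of P' and first(p,P) = c} is a contiguous interval of P': if p1, p2, p3 are vertices of P' with p1 before p2 before p3 in the order of P', and p1 ∈ S and p3 ∈ S, then p2 ∈ S. -/
/-- Reachability in a directed graph: reflexive-transitive closure of the edge relation. -/
def Reach {V : Type*} (G : V → V → Prop) : V → V → Prop := Relation.ReflTransGen G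

/-- A directed path: an injective list of vertices with an edge between consecutive vertices. -/
def IsPath {V : Type*} (G : V → V → Prop) (L : List V) : Prop := L.Nodup ∧ L.Chain' G

/-- The graph obtained from `G` by deleting vertex `f` and all its incident edges. -/
def Del {V : Type*} (G : V → V → Prop) (f : V) : V → V → Prop :=
  fun u v => G u v ∧ u ≠ f ∧ v ≠ f

/-- `c` is the earliest vertex of path `P` reachable from `x` in `G`. -/
def IsFirst {V : Type*} [DecidableEq V] (G : V → V → Prop) (P : List V) (x c : V) : Prop :=
  c ∈ P ∧ Reach G x c ∧ ∀ v ∈ P, Reach G x v → P.idxOf c ≤ P.idxOf v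

/-- `c` is the latest vertex of path `P` that reaches `x` in `G`. -/
def IsLast {V : Type*} [DecidableEq V] (G : V → V → Prop) (P : List V) (x c : V) : Prop :=
  c ∈ P ∧ Reach G c x ∧ ∀ v ∈ P, Reach G v x → P.idxOf v ≤ P.idxOf c


lemma chain'_reach {V : Type*} (G : V → V → Prop) (L : List V) (hL : L.Chain' G)
    {i j : ℕ} (hij : i ≤ j) (hj : j < L.length) :
    Reach G (L.get ⟨i, lt_of_le_of_lt hij hj⟩) (L.get ⟨j, hj⟩) := by
  induction j with
  | zero => obtain rfl := Nat.le_zero.mp hij; exact Relation.ReflTransGen.refl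
  | succ n ih =>
    rcases Nat.lt_or_ge i (n+1) with h | h
    · have hn : n < L.length := lt_trans (Nat.lt_succ_self n) hj
      have := ih (Nat.lt_succ_iff.mp h) hn
      exact this.tail (List.isChain_iff_getElem.mp hL n (by omega))
    · have : i = n + 1 := le_antisymm hij h
      subst this; exact Relation.ReflTransGen.refl

lemma reach_of_indexOf_le {V : Type*} [DecidableEq V] (G : V → V → Prop) (L : List V)
    (hL : L.Chain' G) {a b : V} (ha : a ∈ L) (hb : b ∈ L)
    (h : L.idxOf a ≤ L.idxOf b) : Reach G a b := by
  have h2 := List.idxOf_lt_length_iff.mpr hb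
  have := chain'_reach G L hL h h2
  rwa [List.idxOf_get, List.idxOf_get] at this

/-- the set of vertices p of P' with first(p,P) = c forms a contiguous
interval of P'. -/
theorem first_equal_interval {V : Type*} [DecidableEq V] (G : V → V → Prop)
    (P' P : List V) (hP' : IsPath G P') (hP : IsPath G P) (c : V) (hc : c ∈ P)
    (p1 p2 p3 : V) (h1 : p1 ∈ P') (h2 : p2 ∈ P') (h3 : p3 ∈ P')
    (h12 : P'.idxOf p1 < P'.idxOf p2) (h23 : P'.idxOf p2 < P'.idxOf p3)
    (hf1 : IsFirst G P p1 c) (hf3 : IsFirst G P p3 c) :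
    IsFirst G P p2 c := by
  obtain ⟨hcP, hr3, hmin3⟩ := hf3
  obtain ⟨_, hr1, hmin1⟩ := hf1
  have r23 : Reach G p2 p3 := reach_of_indexOf_le G P' hP'.2 h2 h3 h23.le
  have r12 : Reach G p1 p2 := reach_of_indexOf_le G P' hP'.2 h1 h2 h12.le
  exact ⟨hc, r23.trans hr3, fun v hv hrv => hmin1 v hv (r12.trans hrv)⟩
end

section
/- Let G be a directed graph and P a directed path in G with vertices p_0 < p_1 < ... < p_k (path order). Call a pair (u,v) of vertices of P with v < u a 'detour' if (1) there exists a directed path in G from u to v that contains no vertex of P strictly before v (other than its endpoint v itself being on P), and (2) there is no vertex w of P with u < w such that there exists a directed path in G from w to v containing no vertex of P strictly before v. Then detours do not cross: if (u,v) is a detour, there is no detour (w,x) with v < x < u < w in the order of P. -/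
/-- A directed path in G from a to b containing no vertex of P strictly before v. -/
def AvoidBefore {V : Type*} [DecidableEq V] (G : V → V → Prop) (P : List V)
    (a b v : V) : Prop :=
  ∃ L : List V, IsPath G L ∧ L.head? = some a ∧ L.getLast? = some b ∧
    ∀ w ∈ L, w ∈ P → P.idxOf v ≤ P.idxOf w

/-- A detour (u,v): u after v on P, a u-to-v path in G avoiding P before v exists,
and no vertex w after u on P admits such a path to v. -/
def Detour {V : Type*} [DecidableEq V] (G : V → V → Prop) (P : List V) (u v : V) : Prop :=
  u ∈ P ∧ v ∈ P ∧ P.idxOf v < P.idxOf u ∧ AvoidBefore G P u v v ∧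
    ∀ w ∈ P, P.idxOf u < P.idxOf w → ¬ AvoidBefore G P w v v



private lemma chain'_reach_s2 {V : Type*} (G : V → V → Prop) :
    ∀ (L : List V) (a b : V), L.Chain' G → L.head? = some a → L.getLast? = some b →
      Relation.ReflTransGen G a b
  | [], a, b, _, h, _ => by simp at h
  | [c], a, b, _, h1, h2 => by
      simp at h1 h2; subst h1; subst h2; exact Relation.ReflTransGen.refl
  | c :: d :: t, a, b, hc, h1, h2 => by
      rw [List.head?_cons, Option.some.injEq] at h1
      subst h1
      have hcd : G c d := (List.isChain_cons_cons.mp hc).1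
      have := chain'_reach_s2 G (d :: t) d b (List.isChain_cons_cons.mp hc).2 rfl
        (by rw [← h2]; simp [List.getLast?_cons_cons])
      exact Relation.ReflTransGen.head hcd this

private lemma chain'_restrict {V : Type*} {G : V → V → Prop} {S : V → Prop} :
    ∀ {L : List V}, L.Chain' G → (∀ y ∈ L, S y) →
      L.Chain' (fun a b => G a b ∧ S a ∧ S b)
  | [], _, _ => List.isChain_nil
  | [_], _, _ => List.isChain_singleton _
  | a :: b :: t, hc, hm => by
      rw [List.Chain', List.isChain_cons_cons] at hc ⊢
      exact ⟨⟨hc.1, hm a (by simp), hm b (by simp)⟩,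
        chain'_restrict hc.2 (fun y hy => hm y (List.mem_cons_of_mem _ hy))⟩

private lemma path_of_reach {V : Type*} (G : V → V → Prop) {a b : V}
    (h : Relation.ReflTransGen G a b) :
    ∃ L : List V, L.Nodup ∧ L.Chain' G ∧ L.head? = some a ∧ L.getLast? = some b := by
  induction h using Relation.ReflTransGen.head_induction_on with
  | refl => exact ⟨[b], List.nodup_singleton b, List.isChain_singleton b, rfl, rfl⟩
  | head hac _ ih =>
    obtain ⟨L, hnd, hch, hh, hl⟩ := ih
    rename_i a c _
    by_cases ha : a ∈ L
    · obtain ⟨L1, L2, rfl⟩ := List.append_of_mem ha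
      refine ⟨a :: L2, ?_, ?_, rfl, ?_⟩
      · exact (List.nodup_append.mp hnd).2.1
      · exact hch.suffix ⟨L1, rfl⟩
      · rw [← hl, List.getLast?_append]
        cases L2 with
        | nil => simp
        | cons e t => simp [List.getLast?_cons_cons]; cases h : (e :: t).getLast? with
          | none => simp [List.getLast?_eq_getElem?] at h
          | some z => simp [h, Option.or]
    · refine ⟨a :: L, List.nodup_cons.mpr ⟨ha, hnd⟩, ?_, rfl, ?_⟩
      · exact List.isChain_cons.mpr ⟨fun y hy => by rw [hh] at hy; cases hy; exact hac, hch⟩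
      · cases L with
        | nil => simp at hh
        | cons c0 t => rw [← hl, List.getLast?_cons_cons]

private lemma chain'_restrict_mem {V : Type*} {G : V → V → Prop} {S : V → Prop} :
    ∀ {L : List V} {a : V}, L.Chain' (fun a b => G a b ∧ S a ∧ S b) →
      L.head? = some a → S a → ∀ y ∈ L, S y
  | [], a, _, hh, _ => by simp at hh
  | [c], a, _, hh, hSa => by simp at hh; subst hh; simpa using hSa
  | c :: d :: t, a, hc, hh, hSa => by
      simp at hh; subst hh
      intro y hy
      rcases List.mem_cons.mp hy with rfl | hy
      · exact hSa
      · exact chain'_restrict_mem (List.isChain_cons_cons.mp hc).2 rfl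
          (List.isChain_cons_cons.mp hc).1.2.2 y hy

/-- detours do not cross. -/
theorem detours_noncrossing {V : Type*} [DecidableEq V] (G : V → V → Prop)
    (P : List V) (hP : IsPath G P) (u v w x : V)
    (hd : Detour G P u v) (hd' : Detour G P w x)
    (h1 : P.idxOf v < P.idxOf x) (h2 : P.idxOf x < P.idxOf u)
    (h3 : P.idxOf u < P.idxOf w) :
    False := by
  obtain ⟨huP, hvP, huv, ⟨L, ⟨hLnd, hLch⟩, hLh, hLl, hLmem⟩, hmax⟩ := hd
  obtain ⟨hwP, hxP, hwx, ⟨L', ⟨hL'nd, hL'ch⟩, hL'h, hL'l, hL'mem⟩, _⟩ := hd'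
  set S : V → Prop := fun y => y ∈ P → P.idxOf v ≤ P.idxOf y with hS
  set G' : V → V → Prop := fun a b => G a b ∧ S a ∧ S b with hG'
  -- piece 1 : w to x
  have r1 : Relation.ReflTransGen G' w x :=
    chain'_reach_s2 G' L' w x (chain'_restrict hL'ch
      (fun y hy hyP => le_of_lt (lt_of_lt_of_le h1 (hL'mem y hy hyP)))) hL'h hL'l
  -- piece 3 : u to v
  have r3 : Relation.ReflTransGen G' u v :=
    chain'_reach_s2 G' L u v (chain'_restrict hLch hLmem) hLh hLl
  -- piece 2 : x to u along P
  have hxlt : P.idxOf x < P.length := List.idxOf_lt_length_iff.mpr hxP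
  have hult : P.idxOf u < P.length := List.idxOf_lt_length_iff.mpr huP
  set i := P.idxOf x
  set j := P.idxOf u
  set M : List V := (P.drop i).take (j - i + 1) with hM
  have hMinf : M <:+: P := (List.take_prefix _ _).isInfix.trans (List.drop_suffix i P).isInfix
  have hMlen : M.length = j - i + 1 := by
    simp [hM, List.length_take, List.length_drop]
    omega
  have hMmem : ∀ y ∈ M, S y := by
    intro y hy _
    obtain ⟨k, hk, rfl⟩ := List.getElem_of_mem hy
    have hik : i + k < P.length := by omega
    have hopt : M[k]? = P[i + k]? := by
      rw [hM, List.getElem?_take, if_pos (by omega), List.getElem?_drop]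
    rw [List.getElem?_eq_getElem hk, List.getElem?_eq_getElem hik] at hopt
    rw [Option.some.injEq] at hopt
    rw [hopt, hP.1.idxOf_getElem]
    omega
  have hMh : M.head? = some x := by
    rw [hM, List.head?_take, if_neg (by omega), List.head?_drop,
      List.getElem?_eq_getElem hxlt, List.getElem_idxOf]
  have hMl : M.getLast? = some u := by
    rw [List.getLast?_eq_getElem?, hMlen]
    simp only [Nat.add_sub_cancel]
    rw [hM, List.getElem?_take, if_pos (by omega), List.getElem?_drop]
    have hji : i + (j - i) = j := by omega
    rw [hji, List.getElem?_eq_getElem hult, List.getElem_idxOf]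
  have r2 : Relation.ReflTransGen G' x u :=
    chain'_reach_s2 G' M x u (chain'_restrict (hP.2.infix hMinf) hMmem) hMh hMl
  -- combine
  have r : Relation.ReflTransGen G' w v := (r1.trans r2).trans r3
  obtain ⟨N, hNnd, hNch, hNh, hNl⟩ := path_of_reach G' r
  have hSw : S w := fun _ => by omega
  have hNmem : ∀ y ∈ N, S y := chain'_restrict_mem hNch hNh hSw
  exact hmax w hwP h3 ⟨N, ⟨hNnd, hNch.imp (fun a b hab => hab.1)⟩, hNh, hNl, hNmem⟩
end

section
/- Let G be a directed graph, P a directed path in G with vertex order <, and let H_P be the directed graph on the vertices of P whose edges are: the edges of P, together with a 'detour' edge (u,v) for every pair u > v such that (1) there is a directed path in G from u to v containing no vertex of P strictly before v, and (2) no vertex w of P with w > u admits such a path to v. Then for any vertices f < b of P: the set of vertices p of P with p > f that are reachable from b via a directed path in G containing no vertex q of P with q ≤ f equals the set of vertices p > f reachable from b in the subgraph of H_P induced on the vertices of P strictly after f. -/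
/-- An edge of the path P: u immediately precedes v on P. -/
def PEdge {V : Type*} (P : List V) (u v : V) : Prop :=
  ∃ i : ℕ, P[i]? = some u ∧ P[i + 1]? = some v

set_option linter.unusedSectionVars false

private lemma reach_of_chain'_aux {V : Type*} {r : V → V → Prop} {L : List V} {a b : V}
    (hc : L.Chain' r) (ha : L.head? = some a) (hb : L.getLast? = some b) :
    Relation.ReflTransGen r a b := by
  cases L with
  | nil => simp at ha
  | cons x t =>
    obtain rfl : x = a := by simpa using ha
    rw [List.getLast?_eq_getLast_of_ne_nil (List.cons_ne_nil _ _)] at hb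
    exact List.relationReflTransGen_of_exists_isChain_cons t hc (by simpa using hb)

private lemma exists_nodup_chain_aux {V : Type*} {r : V → V → Prop} {a b : V}
    (h : Relation.ReflTransGen r a b) :
    ∃ L : List V, L.Nodup ∧ L.Chain' r ∧ L.head? = some a ∧ L.getLast? = some b := by
  induction h using Relation.ReflTransGen.head_induction_on with
  | refl => exact ⟨[b], by simp, by simp [List.Chain'], by simp, by simp⟩
  | head hac hcb ih =>
    rename_i a c
    obtain ⟨L, hnd, hch, hhd, hlst⟩ := ih
    have hLne : L ≠ [] := by rintro rfl; simp at hhd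
    by_cases ha : a ∈ L
    · obtain ⟨s, t, rfl⟩ := List.append_of_mem ha
      refine ⟨a :: t, ((List.suffix_append s (a :: t)).sublist).nodup hnd,
        hch.suffix (List.suffix_append s (a :: t)), by simp, ?_⟩
      rwa [List.getLast?_append_of_ne_nil s (List.cons_ne_nil a t)] at hlst
    · refine ⟨a :: L, by simp [hnd, ha], ?_, by simp, ?_⟩
      · refine List.isChain_cons.mpr ⟨?_, hch⟩
        intro y hy
        rw [hhd] at hy
        obtain rfl : c = y := by simpa using hy
        exact hac
      · show (([a] : List V) ++ L).getLast? = some b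
        rwa [List.getLast?_append_of_ne_nil [a] hLne]

section HP
variable {V : Type*} [DecidableEq V]

/-- The restricted H_P relation. -/
def HPr (G : V → V → Prop) (P : List V) (f : V) : V → V → Prop :=
  fun u v => (PEdge P u v ∨ Detour G P u v) ∧ u ∈ P ∧ v ∈ P ∧
    P.idxOf f < P.idxOf u ∧ P.idxOf f < P.idxOf v

/-- Walking forwards along P inside HPr. -/
lemma reach_along_P {G : V → V → Prop} {P : List V} (hP : IsPath G P) (f : V)
    {i j : ℕ} (hij : i ≤ j) (hj : j < P.length) (hi : P.idxOf f < i) :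
    Reach (HPr G P f) (P.get ⟨i, lt_of_le_of_lt hij hj⟩) (P.get ⟨j, hj⟩) := by
  induction j, hij using Nat.le_induction with
  | base => exact Relation.ReflTransGen.refl
  | succ j hij ih =>
    have hj' : j < P.length := Nat.lt_of_succ_lt hj
    refine Relation.ReflTransGen.tail (ih hj') ?_
    have hidx : ∀ (k : ℕ) (hk : k < P.length), P.idxOf (P.get ⟨k, hk⟩) = k := by
      intro k hk; exact hP.1.idxOf_getElem k hk
    refine ⟨Or.inl ⟨j, ?_, ?_⟩, List.get_mem _ _, List.get_mem _ _, ?_, ?_⟩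
    · rw [List.getElem?_eq_some_iff]; exact ⟨hj', rfl⟩
    · rw [List.getElem?_eq_some_iff]; exact ⟨hj, rfl⟩
    · rw [hidx]; omega
    · rw [hidx]; omega
end HP

section Main
variable {V : Type*} [DecidableEq V]

lemma forward_main {G : V → V → Prop} {P : List V} (hP : IsPath G P) (f p : V)
    (hp : p ∈ P) :
    ∀ (n : ℕ) (L : List V) (b : V), L.length ≤ n → IsPath G L → L.head? = some b →
      L.getLast? = some p → (∀ w ∈ L, w ∈ P → P.idxOf f < P.idxOf w) →
      b ∈ P → P.idxOf f < P.idxOf b → Reach (HPr G P f) b p := by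
  intro n
  induction n with
  | zero =>
    intro L b hlen _ hhd _ _ _ _
    cases L
    · simp at hhd
    · simp at hlen
  | succ n ih =>
    intro L b hlen hpath hhd hlst havoid hbP hbf
    cases L with
    | nil => simp at hhd
    | cons x rest =>
      obtain rfl : b = x := by simpa using hhd.symm
      by_cases hrest : rest = []
      · subst hrest
        obtain rfl : p = b := by simpa using hlst.symm
        exact Relation.ReflTransGen.refl
      · set q : V → Bool := fun w => decide (w ∉ P) with hq
        set pre := rest.takeWhile q with hpre
        have hsplit : pre ++ rest.dropWhile q = rest := by rw [hpre]; exact List.takeWhile_append_dropWhile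
        have hplast : rest.getLast? = some p := by
          have hc : (b :: rest) = [b] ++ rest := rfl
          rwa [hc, List.getLast?_append_of_ne_nil [b] hrest] at hlst
        have hpmem : p ∈ rest := by
          rw [List.getLast?_eq_getLast_of_ne_nil hrest] at hplast
          exact (Option.some_inj.mp hplast).symm ▸ List.getLast_mem hrest
        have hdpne : rest.dropWhile q ≠ [] := by
          intro h
          rw [List.dropWhile_eq_nil_iff] at h
          have := h p hpmem
          simp [hq, hp] at this
        obtain ⟨v, post, hdp⟩ := List.exists_cons_of_ne_nil hdpne
        have hvP : v ∈ P := by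
          have h0 := List.head_dropWhile_not q hdpne
          have hv : (rest.dropWhile q).head hdpne = v := by simp [hdp]
          rw [hv] at h0
          simpa [hq] using h0
        have hL : b :: rest = (b :: pre) ++ v :: post := by
          rw [← hsplit, hdp]; rfl
        have hpreP : ∀ w ∈ pre, w ∉ P := by
          intro w hw
          simpa [hq] using List.mem_takeWhile_imp hw
        have hsuf : (v :: post) <:+ (b :: rest) := ⟨b :: pre, hL.symm⟩
        have htail_path : IsPath G (v :: post) :=
          ⟨(hsuf.sublist).nodup hpath.1, hpath.2.suffix hsuf⟩
        have htail_last : (v :: post).getLast? = some p := by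
          rw [hL, List.getLast?_append_of_ne_nil _ (List.cons_ne_nil v post)] at hlst
          exact hlst
        have htail_len : (v :: post).length ≤ n := by
          have h1 : rest.length ≤ n := by simpa using hlen
          have h2 : pre.length + (v :: post).length = rest.length := by
            rw [← hsplit, hdp]; simp
          simp only [List.length_cons] at h2 ⊢
          omega
        have htail_avoid : ∀ w ∈ (v :: post), w ∈ P → P.idxOf f < P.idxOf w := by
          intro w hw hwP
          exact havoid w (by rw [hL]; exact List.mem_append_right _ hw) hwP
        have hvf : P.idxOf f < P.idxOf v :=
          havoid v (by rw [hL]; exact List.mem_append_right _ (by simp)) hvP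
        have hvlt : P.idxOf v < P.length := List.idxOf_lt_length_iff.mpr hvP
        have hblt : P.idxOf b < P.length := List.idxOf_lt_length_iff.mpr hbP
        have hreach_bv : Reach (HPr G P f) b v := by
          rcases le_or_gt (P.idxOf b) (P.idxOf v) with hle | hlt
          · have hr := reach_along_P hP f hle hvlt hbf
            rwa [List.idxOf_get, List.idxOf_get] at hr
          · -- AvoidBefore G P b v v via the segment b :: pre ++ [v]
            have hSpre : (b :: (pre ++ [v])) <+: (b :: rest) := ⟨post, by simp [hL]⟩
            have hAB : AvoidBefore G P b v v := by
              refine ⟨b :: (pre ++ [v]), ⟨(hSpre.sublist).nodup hpath.1,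
                hpath.2.prefix hSpre⟩, by simp, ?_, ?_⟩
              · show ((b :: pre) ++ [v]).getLast? = some v
                rw [List.getLast?_append_of_ne_nil _ (by simp)]; simp
              · intro w hw hwP
                rcases List.mem_cons.mp hw with rfl | hw'
                · exact le_of_lt hlt
                · rcases List.mem_append.mp hw' with hw'' | hw''
                  · exact absurd hwP (hpreP w hw'')
                  · obtain rfl : w = v := by simpa using hw''
                    exact le_refl _
            classical
            set T : Finset ℕ := (Finset.range P.length).filter
              (fun i => ∃ h : i < P.length, AvoidBefore G P (P.get ⟨i, h⟩) v v) with hT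
            have hbT : P.idxOf b ∈ T := by
              rw [hT, Finset.mem_filter]
              exact ⟨Finset.mem_range.mpr hblt, hblt, by rw [List.idxOf_get]; exact hAB⟩
            have hTne : T.Nonempty := ⟨_, hbT⟩
            set j := T.max' hTne with hj
            have hjT : j ∈ T := T.max'_mem hTne
            rw [hT, Finset.mem_filter] at hjT
            obtain ⟨-, hjlt, hABu⟩ := hjT
            set u := P.get ⟨j, hjlt⟩ with hu
            have hu_idx : P.idxOf u = j := hP.1.idxOf_getElem _ _
            have huP : u ∈ P := List.get_mem _ _
            have hbj : P.idxOf b ≤ j := T.le_max' _ hbT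
            have hdet : Detour G P u v := by
              refine ⟨huP, hvP, by omega, hABu, ?_⟩
              intro w hwP hgt hABw
              have hwT : P.idxOf w ∈ T := by
                rw [hT, Finset.mem_filter]
                exact ⟨Finset.mem_range.mpr (List.idxOf_lt_length_iff.mpr hwP),
                  List.idxOf_lt_length_iff.mpr hwP, by rw [List.idxOf_get]; exact hABw⟩
              have := T.le_max' _ hwT
              omega
            have hedge : HPr G P f u v :=
              ⟨Or.inr hdet, huP, hvP, by omega, hvf⟩
            have hru : Reach (HPr G P f) b u := by
              have hr := reach_along_P hP f hbj hjlt hbf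
              rwa [List.idxOf_get] at hr
            exact hru.tail hedge
        exact hreach_bv.trans
          (ih (v :: post) v htail_len htail_path rfl htail_last htail_avoid hvP hvf)
end Main

section Back
variable {V : Type*} [DecidableEq V]

lemma chain'_and_cond {r : V → V → Prop} {C : V → Prop} {L : List V}
    (hch : L.Chain' r) (hc : ∀ w ∈ L, C w) :
    L.Chain' (fun x y => r x y ∧ C x ∧ C y) := by
  simp only [List.Chain'] at hch ⊢
  rw [List.isChain_iff_getElem] at hch ⊢
  intro i h
  exact ⟨hch i h, hc _ (List.getElem_mem _), hc _ (List.getElem_mem _)⟩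

lemma cond_of_chain {r : V → V → Prop} {C : V → Prop} {L : List V} {b : V}
    (hch : L.Chain' (fun x y => r x y ∧ C x ∧ C y)) (hhd : L.head? = some b) (hb : C b) :
    ∀ w ∈ L, C w := by
  intro w hw
  obtain ⟨⟨i, hi⟩, rfl⟩ := List.mem_iff_get.mp hw
  cases i with
  | zero =>
    cases L with
    | nil => simp at hhd
    | cons x t =>
      obtain rfl : x = b := by simpa using hhd
      exact hb
  | succ k =>
    have := List.isChain_iff_getElem.mp hch k (by omega)
    exact this.2.2

lemma edge_to_reach {G : V → V → Prop} {P : List V} (hP : IsPath G P) (f : V)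
    (u v : V) (h : HPr G P f u v) :
    Relation.ReflTransGen
      (fun x y => G x y ∧ (x ∈ P → P.idxOf f < P.idxOf x)
        ∧ (y ∈ P → P.idxOf f < P.idxOf y)) u v := by
  obtain ⟨hor, huP, hvP, huf, hvf⟩ := h
  rcases hor with ⟨i, h1, h2⟩ | ⟨-, -, -, ⟨L, ⟨hnd, hch⟩, hhd, hlst, hav⟩, -⟩
  · obtain ⟨hi, rfl⟩ := List.getElem?_eq_some_iff.mp h1
    obtain ⟨hi1, rfl⟩ := List.getElem?_eq_some_iff.mp h2
    have hG := List.isChain_iff_getElem.mp hP.2 i (by omega)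
    exact Relation.ReflTransGen.single ⟨hG, fun _ => huf, fun _ => hvf⟩
  · have hc : ∀ w ∈ L, w ∈ P → P.idxOf f < P.idxOf w :=
      fun w hw hwP => lt_of_lt_of_le hvf (hav w hw hwP)
    exact reach_of_chain'_aux (chain'_and_cond hch hc) hhd hlst

end Back


/-- for f < b on P, the vertices p > f of P reachable from b in G by a
path avoiding all vertices q ≤ f of P are exactly those reachable from b in the
subgraph of H_P induced on the vertices of P strictly after f. -/
theorem reach_HP_iff {V : Type*} [DecidableEq V] (G : V → V → Prop) (P : List V)
    (hP : IsPath G P) (f b : V) (hf : f ∈ P) (hb : b ∈ P)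
    (hfb : P.idxOf f < P.idxOf b) :
    ∀ p ∈ P, P.idxOf f < P.idxOf p →
      ((∃ L : List V, IsPath G L ∧ L.head? = some b ∧ L.getLast? = some p ∧
          ∀ w ∈ L, w ∈ P → P.idxOf f < P.idxOf w)
        ↔
       Reach (fun u v => (PEdge P u v ∨ Detour G P u v) ∧ u ∈ P ∧ v ∈ P ∧
          P.idxOf f < P.idxOf u ∧ P.idxOf f < P.idxOf v) b p) := by
  intro p hpP hpf
  constructor
  · rintro ⟨L, hpath, hhd, hlst, hav⟩
    exact forward_main hP f p hpP L.length L b le_rfl hpath hhd hlst hav hb hfb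
  · intro hr
    have hr' : Relation.ReflTransGen
        (fun x y => G x y ∧ (x ∈ P → P.idxOf f < P.idxOf x)
          ∧ (y ∈ P → P.idxOf f < P.idxOf y)) b p := by
      clear hpP hpf
      induction hr with
      | refl => exact Relation.ReflTransGen.refl
      | tail _ hbc ih => exact ih.trans (edge_to_reach hP f _ _ hbc)
    obtain ⟨L, hnd, hch, hhd, hlst⟩ := exists_nodup_chain_aux hr'
    refine ⟨L, ⟨hnd, List.IsChain.imp (fun a b h => h.1) hch⟩, hhd, hlst, ?_⟩
    exact cond_of_chain hch hhd (fun _ => hfb)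
end

section
/- Let G be a directed graph, s and t vertices of G, and P a directed path in G such that every directed path from s to t in G contains at least one vertex of P. Suppose first(s,P), the earliest vertex of P reachable from s, and last(t,P), the latest vertex of P that reaches t, both exist. Then t is reachable from s in G if and only if first(s,P) ≤ last(t,P) in the path order of P. -/
open List Relation

lemma dedup_chain {V : Type*} {r : V → V → Prop} :
    ∀ (l : List V) (a : V), Chain r a l →
      ∃ m, Chain r a m ∧ (a::m).getLast? = (a::l).getLast? ∧ (a::m).Nodup ∧ m ⊆ l
  | [], _, _ => ⟨[], Chain.nil, rfl, by simp, by simp⟩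
  | x :: l', a, h => by
    by_cases ha : a ∈ x :: l'
    · obtain ⟨l₁, l₂, heq⟩ := List.append_of_mem ha
      rw [heq] at h
      have h₂ : Chain r a l₂ := (List.isChain_cons_split.mp h).2
      have hlt : l₂.length < (x :: l').length := by
        rw [heq]; simp; omega
      obtain ⟨m, hm, hlast, hnd, hsub⟩ := dedup_chain l₂ a h₂
      refine ⟨m, hm, ?_, hnd, fun y hy => heq ▸ (by simp [hsub hy])⟩
      rw [hlast, heq]
      have : (a :: (l₁ ++ a :: l₂)) = (a::l₁) ++ (a::l₂) := by simp
      rw [this, List.getLast?_append_of_ne_nil _ (by simp)]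
    · obtain ⟨hax, hch⟩ := List.chain_cons.mp h
      obtain ⟨m, hm, hlast, hnd, hsub⟩ := dedup_chain l' x hch
      have hamem : a ∉ x :: m := by
        intro hmem
        rcases List.mem_cons.mp hmem with h1 | h2
        · exact ha (by simp [h1])
        · exact ha (List.mem_cons_of_mem _ (hsub h2))
      exact ⟨x :: m, List.chain_cons.mpr ⟨hax, hm⟩, by simpa using hlast,
        List.nodup_cons.mpr ⟨hamem, hnd⟩, List.cons_subset_cons _ hsub⟩
  termination_by l a h => l.length
  decreasing_by
  · exact hlt
  · simp

lemma reach_of_mem_chain {V : Type*} {r : V → V → Prop} :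
    ∀ (m : List V) (a w : V), Chain r a m → w ∈ a :: m → ReflTransGen r a w
  | [], a, w, _, hw => by simp at hw; exact hw ▸ ReflTransGen.refl
  | x :: m', a, w, h, hw => by
    obtain ⟨hax, hch⟩ := List.chain_cons.mp h
    rcases List.mem_cons.mp hw with h1 | h2
    · exact h1 ▸ ReflTransGen.refl
    · exact ReflTransGen.head hax (reach_of_mem_chain m' x w hch h2)

lemma mem_reach_last {V : Type*} {r : V → V → Prop} :
    ∀ (m : List V) (a w b : V), Chain r a m → w ∈ a :: m →
      (a :: m).getLast? = some b → ReflTransGen r w b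
  | [], a, w, b, _, hw, hb => by
    simp at hw hb; subst hw; subst hb; exact ReflTransGen.refl
  | x :: m', a, w, b, h, hw, hb => by
    obtain ⟨hax, hch⟩ := List.chain_cons.mp h
    have hb' : (x :: m').getLast? = some b := by simpa using hb
    rcases List.mem_cons.mp hw with h1 | h2
    · subst h1
      exact ReflTransGen.head hax (mem_reach_last m' x x b hch (by simp) hb')
    · exact mem_reach_last m' x w b hch h2 hb'

lemma chain'_reach_s7 {V : Type*} {r : V → V → Prop} {P : List V} (h : List.Chain' r P)
    {i j : ℕ} (hij : i ≤ j) (hj : j < P.length) :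
    ReflTransGen r (P.get ⟨i, lt_of_le_of_lt hij hj⟩) (P.get ⟨j, hj⟩) := by
  induction j with
  | zero => interval_cases i; exact ReflTransGen.refl
  | succ n ih =>
    rcases Nat.lt_or_ge i (n+1) with h1 | h2
    · have hn : n < P.length := by omega
      have step : r (P.get ⟨n, hn⟩) (P.get ⟨n+1, hj⟩) := by
        have := List.isChain_iff_getElem.mp h n (by omega)
        convert this using 2 <;> simp
      exact (ih (by omega) hn).tail step
    · have : i = n + 1 := by omega
      subst this; exact ReflTransGen.refl

/-- Thorup's criterion. If every s-to-t path meets P, then s reaches t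
iff first(s,P) ≤ last(t,P) in the path order of P. -/
theorem reach_iff_first_le_last {V : Type*} [DecidableEq V] (G : V → V → Prop)
    (P : List V) (hP : IsPath G P) (s t a c : V)
    (hcut : ∀ L : List V, IsPath G L → L.head? = some s → L.getLast? = some t →
      ∃ w ∈ L, w ∈ P)
    (ha : IsFirst G P s a) (hc : IsLast G P t c) :
    Reach G s t ↔ P.idxOf a ≤ P.idxOf c := by
  constructor
  · intro hst
    obtain ⟨l, hl, hlast⟩ := List.exists_isChain_cons_of_relationReflTransGen hst
    have hlast2 : (s :: l).getLast? = some t := by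
      rw [List.getLast?_eq_getLast (List.cons_ne_nil _ _), hlast]
    obtain ⟨m, hm, hlast', hnd, _⟩ := dedup_chain l s hl
    have hmt : (s :: m).getLast? = some t := hlast'.trans hlast2
    obtain ⟨w, hwL, hwP⟩ := hcut (s :: m) ⟨hnd, hm⟩ rfl hmt
    have h1 : Reach G s w := reach_of_mem_chain m s w hm hwL
    have h2 : Reach G w t := mem_reach_last m s w t hm hwL hmt
    exact le_trans (ha.2.2 w hwP h1) (hc.2.2 w hwP h2)
  · intro hle
    have hcP : c ∈ P := hc.1
    have haP : a ∈ P := ha.1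
    have hj : P.idxOf c < P.length := List.idxOf_lt_length_iff.mpr hcP
    have hreach := chain'_reach_s7 hP.2 hle hj
    rw [List.idxOf_get, List.idxOf_get] at hreach
    exact (ha.2.1.trans hreach).trans hc.2.1
end

section
/- Let G be a directed graph, f a vertex with f not on the directed path P, and let s, t be vertices of G \ {f} such that every directed path from s to t in G \ {f} contains a vertex of P. Then t is reachable from s in G \ {f} if and only if both first_{G\{f}}(s,P) and last_{G\{f}}(t,P) exist and first_{G\{f}}(s,P) ≤ last_{G\{f}}(t,P) in the path order of P. -/
section Aux

variable {V : Type*} {r : V → V → Prop}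

lemma reach_of_chain : ∀ {x : V} {L : List V}, List.Chain r x L → ∀ {y}, y ∈ L → Reach r x y := by
  intro x L h
  induction L generalizing x with
  | nil => intro y hy; simp at hy
  | cons b l ih =>
    have hab : r x b := (List.isChain_cons_cons.1 h).1
    have hbl : List.Chain r b l := (List.isChain_cons_cons.1 h).2
    intro y hy
    rcases List.mem_cons.1 hy with rfl | hy
    · exact Relation.ReflTransGen.single hab
    · exact (Relation.ReflTransGen.single hab).trans (ih hbl hy)

lemma reach_head_mem {x y : V} {L : List V} (h : List.Chain r x L) (hy : y ∈ x :: L) :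
    Reach r x y := by
  rcases List.mem_cons.1 hy with rfl | hy
  · exact Relation.ReflTransGen.refl
  · exact reach_of_chain h hy

lemma reach_head'_mem {y : V} {L : List V} (h : L.Chain' r) {x : V} (hx : L.head? = some x)
    (hy : y ∈ L) : Reach r x y := by
  cases L with
  | nil => simp at hx
  | cons a l =>
    obtain rfl : a = x := by simpa using hx
    exact reach_head_mem h hy

lemma reach_mem_last : ∀ {L : List V}, L.Chain' r → ∀ {y}, y ∈ L → ∀ {z},
    L.getLast? = some z → Reach r y z := by
  intro L
  induction L with
  | nil => intro _ y hy; simp at hy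
  | cons a l ih =>
    intro h y hy z hz
    rcases List.mem_cons.1 hy with rfl | hy
    · exact reach_head_mem h (List.mem_of_mem_getLast? hz)
    · have hl : l ≠ [] := List.ne_nil_of_mem hy
      have hz' : l.getLast? = some z := by
        rw [show a :: l = [a] ++ l from rfl, List.getLast?_append_of_ne_nil _ hl] at hz
        exact hz
      exact ih h.tail hy hz'

lemma exists_path {s t : V} (h : Reach r s t) :
    ∃ L : List V, IsPath r L ∧ L.head? = some s ∧ L.getLast? = some t := by
  unfold Reach at h
  induction h using Relation.ReflTransGen.head_induction_on with
  | refl => exact ⟨[t], ⟨List.nodup_singleton t, List.isChain_singleton t⟩, rfl, rfl⟩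
  | @head a b hab hbt ih =>
    obtain ⟨L, ⟨hnd, hch⟩, hhd, hlast⟩ := ih
    have hLne : L ≠ [] := by rintro rfl; simp at hhd
    by_cases hmem : a ∈ L
    · obtain ⟨l₁, l₂, rfl⟩ := List.append_of_mem hmem
      refine ⟨a :: l₂, ⟨hnd.sublist (List.sublist_append_right l₁ (a :: l₂)),
        hch.suffix ⟨l₁, rfl⟩⟩, rfl, ?_⟩
      rwa [List.getLast?_append_of_ne_nil _ (List.cons_ne_nil a l₂)] at hlast
    · refine ⟨a :: L, ⟨List.nodup_cons.2 ⟨hmem, hnd⟩, List.isChain_cons.2 ⟨?_, hch⟩⟩, rfl, ?_⟩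
      · intro y hy
        rw [hhd] at hy
        obtain rfl : b = y := by simpa using hy
        exact hab
      · rw [show a :: L = [a] ++ L from rfl, List.getLast?_append_of_ne_nil _ hLne]
        exact hlast

lemma reach_of_indexOf_le_s8 [DecidableEq V] {P : List V} (hch : P.Chain' r) {a c : V}
    (ha : a ∈ P) (hc : c ∈ P) (hle : P.idxOf a ≤ P.idxOf c) : Reach r a c := by
  set i := P.idxOf a with hi
  have hia : i < P.length := List.idxOf_lt_length_iff.2 ha
  have hjc : P.idxOf c < P.length := List.idxOf_lt_length_iff.2 hc
  have hdrop : P.drop i = P[i] :: P.drop (i + 1) := List.drop_eq_getElem_cons hia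
  have hgi : P[i] = a := List.getElem_idxOf hia
  have hcD : c ∈ P.drop i := by
    have hlen : P.idxOf c - i < (P.drop i).length := by
      rw [List.length_drop]; omega
    have : (P.drop i)[P.idxOf c - i] = c := by
      rw [List.getElem_drop]
      have : i + (P.idxOf c - i) = P.idxOf c := by omega
      simp_rw [this]
      exact List.getElem_idxOf hjc
    exact this ▸ List.getElem_mem hlen
  rw [hdrop, hgi] at hcD
  have hchD : (a :: P.drop (i + 1)).Chain' r := by
    rw [← hgi, ← hdrop]; exact hch.drop i
  exact reach_head_mem hchD hcD

lemma chain'_del {G : V → V → Prop} {f : V} {P : List V} (h : P.Chain' G) (hf : f ∉ P) :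
    P.Chain' (Del G f) := by
  rw [List.Chain', List.isChain_iff_getElem] at h ⊢
  intro i hi
  refine ⟨h i hi, fun he => hf (he ▸ List.getElem_mem _), fun he => hf (he ▸ List.getElem_mem _)⟩

end Aux

/-- faulty version of Thorup's criterion, with f not on P. -/
theorem reach_del_iff_first_le_last {V : Type*} [DecidableEq V] (G : V → V → Prop)
    (P : List V) (hP : IsPath G P) (f s t : V) (hfP : f ∉ P)
    (hs : s ≠ f) (ht : t ≠ f)
    (hcut : ∀ L : List V, IsPath (Del G f) L → L.head? = some s →
      L.getLast? = some t → ∃ w ∈ L, w ∈ P) :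
    Reach (Del G f) s t ↔
      ∃ a c, IsFirst (Del G f) P s a ∧ IsLast (Del G f) P t c ∧
        P.idxOf a ≤ P.idxOf c := by
  set G' := Del G f with hG'
  constructor
  · intro h
    obtain ⟨L, hLpath, hhd, hlast⟩ := exists_path h
    obtain ⟨w, hwL, hwP⟩ := hcut L hLpath hhd hlast
    have hsw : Reach G' s w := reach_head'_mem hLpath.2 hhd hwL
    have hwt : Reach G' w t := reach_mem_last hLpath.2 hwL hlast
    set A : Set ℕ := {n | ∃ v ∈ P, Reach G' s v ∧ P.idxOf v = n} with hA
    set B : Set ℕ := {n | ∃ v ∈ P, Reach G' v t ∧ P.idxOf v = n} with hB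
    have hAne : A.Nonempty := ⟨P.idxOf w, w, hwP, hsw, rfl⟩
    have hBne : B.Nonempty := ⟨P.idxOf w, w, hwP, hwt, rfl⟩
    have hBbdd : BddAbove B := by
      refine ⟨P.length, ?_⟩
      rintro n ⟨v, hv, -, rfl⟩
      exact (List.idxOf_lt_length_iff.2 hv).le
    obtain ⟨a, haP, hsa, hia⟩ := Nat.sInf_mem hAne
    obtain ⟨c, hcP, hct, hic⟩ := Nat.sSup_mem hBne hBbdd
    refine ⟨a, c, ⟨haP, hsa, ?_⟩, ⟨hcP, hct, ?_⟩, ?_⟩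
    · intro v hv hrv
      rw [hia]
      exact Nat.sInf_le ⟨v, hv, hrv, rfl⟩
    · intro v hv hrv
      rw [hic]
      exact le_csSup hBbdd ⟨v, hv, hrv, rfl⟩
    · calc P.idxOf a ≤ P.idxOf w := by
            rw [hia]; exact Nat.sInf_le ⟨w, hwP, hsw, rfl⟩
        _ ≤ P.idxOf c := by
            rw [hic]; exact le_csSup hBbdd ⟨w, hwP, hwt, rfl⟩
  · rintro ⟨a, c, ⟨haP, hsa, -⟩, ⟨hcP, hct, -⟩, hle⟩
    have hchain : P.Chain' G' := chain'_del hP.2 hfP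
    exact (hsa.trans (reach_of_indexOf_le_s8 hchain haP hcP hle)).trans hct
end

section
/- Let G be a directed graph, P a directed path in G, s and f vertices such that s reaches f in G and both first(s,P) and first(f,P) exist, where first(x,P) denotes the earliest vertex of P reachable from x in G. If every directed path in G from s to first(s,P) passes through f, then first(s,P) = first(f,P). Equivalently (contrapositive): if first(s,P) ≠ first(f,P), then first(s,P) is reachable from s in G \ {f} (provided s ≠ f), and hence the earliest vertex of P reachable from s in G \ {f} equals first(s,P). -/
section Aux

variable {V : Type*} {R : V → V → Prop}

lemma reach_of_chain' : ∀ (L : List V) (x y : V), L.Chain' R → L.head? = some x →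
    L.getLast? = some y → Relation.ReflTransGen R x y := by
  intro L
  induction L with
  | nil => intro x y _ h; simp at h
  | cons a t ih =>
    intro x y hch hh hl
    cases t with
    | nil =>
      simp at hh hl; subst hh; subst hl; rfl
    | cons b t =>
      simp only [List.Chain', List.isChain_cons_cons] at hch
      simp only [List.head?_cons, Option.some.injEq] at hh
      subst hh
      rw [List.getLast?_cons_cons] at hl
      exact Relation.ReflTransGen.head hch.1 (ih b y hch.2 rfl hl)

lemma reach_last_of_mem : ∀ (L : List V) (x y : V), x ∈ L → L.Chain' R →
    L.getLast? = some y → Relation.ReflTransGen R x y := by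
  intro L
  induction L with
  | nil => simp
  | cons a t ih =>
    intro x y hx hch hl
    rcases List.mem_cons.mp hx with rfl | hx
    · exact reach_of_chain' (x :: t) x y hch rfl hl
    · cases t with
      | nil => simp at hx
      | cons b t' =>
        rw [List.getLast?_cons_cons] at hl
        exact ih x y hx (List.isChain_cons_cons.mp hch).2 hl

lemma exists_nodup_path (x y : V) (h : Relation.ReflTransGen R x y) :
    ∃ M : List V, M.Nodup ∧ M.Chain' R ∧ M.head? = some x ∧ M.getLast? = some y := by
  induction h using Relation.ReflTransGen.head_induction_on with
  | refl => exact ⟨[y], by simp, List.isChain_singleton y, by simp, by simp⟩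
  | head hab _ ih =>
    rename_i p q _
    obtain ⟨M, hnd, hch, hh, hl⟩ := ih
    by_cases hpM : p ∈ M
    · obtain ⟨M₁, M₂, rfl⟩ := List.append_of_mem hpM
      refine ⟨p :: M₂, ?_, ?_, rfl, ?_⟩
      · exact (List.sublist_append_right M₁ (p :: M₂)).nodup hnd
      · exact hch.suffix ⟨M₁, rfl⟩
      · rwa [List.getLast?_append_of_ne_nil _ (by simp)] at hl
    · refine ⟨p :: M, List.nodup_cons.mpr ⟨hpM, hnd⟩, ?_, rfl, ?_⟩
      · refine List.isChain_cons.mpr ⟨?_, hch⟩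
        intro b hb; rw [hh] at hb; cases hb; exact hab
      · cases M with
        | nil => simp at hh
        | cons m t => rw [List.getLast?_cons_cons]; exact hl

lemma chain'_del_s9 (G : V → V → Prop) (f : V) : ∀ (L : List V), L.Chain' G → f ∉ L →
    L.Chain' (Del G f) := by
  intro L
  induction L with
  | nil => simp [List.Chain']
  | cons a t ih =>
    intro hch hf
    cases t with
    | nil => simp [List.Chain']
    | cons b t' =>
      simp only [List.Chain', List.isChain_cons_cons] at hch ⊢
      simp only [List.mem_cons, not_or] at hf
      exact ⟨⟨hch.1, Ne.symm hf.1, Ne.symm hf.2.1⟩, ih hch.2 (by simp [not_or]; exact hf.2)⟩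

end Aux

/-- if every s-to-first(s,P) path passes through f then
first(s,P) = first(f,P); contrapositively, if they differ then first(s,P) is still
the earliest vertex of P reachable from s in G \ {f}. -/
theorem first_eq_of_all_through_fault {V : Type*} [DecidableEq V] (G : V → V → Prop)
    (P : List V) (hP : IsPath G P) (s f a c : V)
    (hsf : Reach G s f) (ha : IsFirst G P s a) (hc : IsFirst G P f c) :
    ((∀ L : List V, IsPath G L → L.head? = some s → L.getLast? = some a → f ∈ L) →
        a = c)
    ∧ (a ≠ c → s ≠ f → Reach (Del G f) s a ∧ IsFirst (Del G f) P s a) := by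
  have part1 : (∀ L : List V, IsPath G L → L.head? = some s → L.getLast? = some a → f ∈ L) →
      a = c := by
    intro h
    obtain ⟨M, hnd, hch, hh, hl⟩ := exists_nodup_path s a ha.2.1
    have hfM : f ∈ M := h M ⟨hnd, hch⟩ hh hl
    have hfa : Reach G f a := reach_last_of_mem M f a hfM hch hl
    have h1 : P.idxOf c ≤ P.idxOf a := hc.2.2 a ha.1 hfa
    have h2 : P.idxOf a ≤ P.idxOf c := ha.2.2 c hc.1 (Relation.ReflTransGen.trans hsf hc.2.1)
    exact (List.idxOf_inj ha.1).mp (le_antisymm h2 h1)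
  refine ⟨part1, fun hac _ => ?_⟩
  have hex : ∃ L : List V, IsPath G L ∧ L.head? = some s ∧ L.getLast? = some a ∧ f ∉ L := by
    by_contra hno
    push_neg at hno
    exact hac (part1 fun L hLp hLh hLl => hno L hLp hLh hLl)
  obtain ⟨L, hLp, hLh, hLl, hLf⟩ := hex
  have hreach : Reach (Del G f) s a :=
    reach_of_chain' L s a (chain'_del_s9 G f L hLp.2 hLf) hLh hLl
  exact ⟨hreach, ha.1, hreach,
    fun v hv hr => ha.2.2 v hv (Relation.ReflTransGen.mono (fun (u w : V) (huw : Del G f u w) => huw.1) s v hr)⟩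
end

section
/- Let G be a directed graph, P a directed path in G, t and f vertices such that f reaches t in G and both last(t,P) and last(f,P) exist, where last(x,P) denotes the latest vertex of P that reaches x in G. If every directed path in G from last(t,P) to t passes through f, then last(t,P) = last(f,P). Equivalently: if last(t,P) ≠ last(f,P) and t ≠ f, then the latest vertex of P that reaches t in G \ {f} equals last(t,P). -/
/-- From reachability, extract an honest (nodup) path. -/
lemma reach_exists_path {V : Type*} [DecidableEq V] (G : V → V → Prop) {x y : V}
    (h : Reach G x y) :
    ∃ L : List V, IsPath G L ∧ L.head? = some x ∧ L.getLast? = some y := by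
  induction h using Relation.ReflTransGen.head_induction_on with
  | refl => exact ⟨[y], ⟨List.nodup_singleton y, List.isChain_singleton y⟩, rfl, rfl⟩
  | @head a z hxz _ ih =>
    obtain ⟨L, ⟨hnd, hch⟩, hh, hl⟩ := ih
    by_cases hx : a ∈ L
    · have hlt : L.idxOf a < L.length := List.idxOf_lt_length_iff.2 hx
      refine ⟨L.drop (L.idxOf a),
        ⟨hnd.sublist (List.drop_sublist _ _), hch.suffix (List.drop_suffix _ _)⟩, ?_, ?_⟩
      · rw [List.head?_drop, List.getElem?_idxOf hx]
      · have hd : L.drop (L.idxOf a) ≠ [] := by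
          simpa [List.drop_eq_nil_iff, not_le] using hlt
        rw [← hl]
        conv_rhs => rw [← List.take_append_drop (L.idxOf a) L]
        rw [List.getLast?_append_of_ne_nil _ hd]
    · refine ⟨a :: L, ⟨List.nodup_cons.2 ⟨hx, hnd⟩, List.isChain_cons.2 ⟨?_, hch⟩⟩, rfl, ?_⟩
      · intro b hb; rw [hh] at hb; cases hb; exact hxz
      · cases L with
        | nil => simp at hh
        | cons w L' => rw [List.getLast?_cons_cons]; exact hl

/-- Walking a chain avoiding `f` gives reachability in `Del G f`. -/
lemma chain_reach_del {V : Type*} (G : V → V → Prop) (f : V) :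
    ∀ (L : List V) (x y : V), L.Chain' G → f ∉ L → L.head? = some x →
      L.getLast? = some y → Reach (Del G f) x y := by
  intro L
  induction L with
  | nil => intro x y _ _ h; simp at h
  | cons a L ih =>
    intro x y hch hf hh hl
    cases hh
    cases L with
    | nil =>
      cases hl
      exact Relation.ReflTransGen.refl
    | cons b L' =>
      have hab : G a b := (List.isChain_cons_cons.1 hch).1
      have h1 : Reach (Del G f) b y := by
        refine ih b y (List.isChain_cons_cons.1 hch).2 (fun h => hf (by simp [h])) rfl ?_
        rwa [List.getLast?_cons_cons] at hl
      refine Relation.ReflTransGen.head ⟨hab, ?_, ?_⟩ h1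
      · intro h; exact hf (by simp [h])
      · intro h; exact hf (by simp [h])

/-- If a chain starts at `b` and contains `f`, then `b` reaches `f`. -/
lemma chain_reach_mem {V : Type*} (G : V → V → Prop) (f : V) :
    ∀ (L : List V) (b : V), L.Chain' G → L.head? = some b → f ∈ L → Reach G b f := by
  intro L
  induction L with
  | nil => intro b _ h; simp at h
  | cons a L ih =>
    intro b hch hh hf
    cases hh
    rcases List.mem_cons.1 hf with rfl | hf'
    · exact Relation.ReflTransGen.refl
    · cases L with
      | nil => simp at hf'
      | cons c L' =>
        exact Relation.ReflTransGen.head (List.isChain_cons_cons.1 hch).1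
          (ih c (List.isChain_cons_cons.1 hch).2 rfl hf')

/-- if every last(t,P)-to-t path passes through f then
last(t,P) = last(f,P); contrapositively, if they differ then last(t,P) is still the
latest vertex of P reaching t in G \ {f}. -/
theorem last_eq_of_all_through_fault {V : Type*} [DecidableEq V] (G : V → V → Prop)
    (P : List V) (hP : IsPath G P) (t f b c : V)
    (hft : Reach G f t) (hb : IsLast G P t b) (hc : IsLast G P f c) :
    ((∀ L : List V, IsPath G L → L.head? = some b → L.getLast? = some t → f ∈ L) →
        b = c)
    ∧ (b ≠ c → t ≠ f → IsLast (Del G f) P t b) := by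
  have part1 : (∀ L : List V, IsPath G L → L.head? = some b → L.getLast? = some t → f ∈ L) →
      b = c := by
    intro hall
    obtain ⟨L, hLp, hh, hl⟩ := reach_exists_path G hb.2.1
    have hfL : f ∈ L := hall L hLp hh hl
    have hbf : Reach G b f := chain_reach_mem G f L b hLp.2 hh hfL
    have h1 : P.idxOf b ≤ P.idxOf c := hc.2.2 b hb.1 hbf
    have h2 : P.idxOf c ≤ P.idxOf b := hb.2.2 c hc.1 (hc.2.1.trans hft)
    exact ((List.idxOf_inj hb.1).1 (le_antisymm h1 h2))
  refine ⟨part1, ?_⟩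
  intro hbc _
  have : ¬ ∀ L : List V, IsPath G L → L.head? = some b → L.getLast? = some t → f ∈ L :=
    fun h => hbc (part1 h)
  push_neg at this
  obtain ⟨L, hLp, hh, hl, hfL⟩ := this
  refine ⟨hb.1, chain_reach_del G f L b t hLp.2 hfL hh hl, ?_⟩
  intro v hv hreach
  exact hb.2.2 v hv (Relation.ReflTransGen.mono (r := Del G f) (p := G) (fun _ _ h => h.1) v t hreach)
end
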